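/- arXiv:2105.08114 — 2 statements merged into one kernel-verified Lean document; each statement's English description precedes it below -/
import Mathlib

section
/- For every feasible distribution p for the symmetric TSC scheme, one has Σ_{m=1}^{N^K} p_m log p_m ≥ Σ_{m=1}^{N^K} p*_m log p*_m (with the convention 0·log 0 = 0); consequently p* minimizes the Kullback–Leibler divergence Σ_m p_m log(N^K p_m) from the uniform distribution among all feasible distributions. -/
open Finset Real

/-- Download cost of option `m` (0-indexed: options `1,…,N` of the paper are `m < N`)
in the symmetric TSC scheme with `N` databases and `K` messages. -/
noncomputable def tscCost (N m : ℕ) : ℝ := if m < N then (N : ℝ) - 1 else (N : ℝ)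

/-- `p` is a feasible query distribution for the symmetric TSC scheme with expected
normalized download cost `D`. -/
def TSCFeasible (N K : ℕ) (D : ℝ) (p : ℕ → ℝ) : Prop :=
  (∀ m ∈ Finset.range (N ^ K), 0 ≤ p m) ∧
  (∑ m ∈ Finset.range (N ^ K), p m = 1) ∧
  (1 / ((N : ℝ) - 1)) * (∑ m ∈ Finset.range (N ^ K), p m * tscCost N m) = D

/-- The optimal distribution `p*` for the symmetric TSC scheme. -/
noncomputable def tscOpt (N K : ℕ) (D : ℝ) (m : ℕ) : ℝ :=
  if m < N then (1 - ((N : ℝ) - 1) * (D - 1)) / N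
  else ((N : ℝ) - 1) * (D - 1) / ((N : ℝ) ^ K - (N : ℝ))

/-- Download cost of option `m` (0-indexed) in the alternative PIR scheme with
message length `L`. -/
noncomputable def altCost (N L m : ℕ) : ℝ := if m < N then (L : ℝ) else (L : ℝ) + 1

/-- `p` is a feasible query distribution for the alternative PIR scheme
(`M = N (L+1)^(K-1)` options) with expected normalized download cost `D`. -/
def AltFeasible (N K L : ℕ) (D : ℝ) (p : ℕ → ℝ) : Prop :=
  (∀ m ∈ Finset.range (N * (L + 1) ^ (K - 1)), 0 ≤ p m) ∧
  (∑ m ∈ Finset.range (N * (L + 1) ^ (K - 1)), p m = 1) ∧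
  (1 / (L : ℝ)) * (∑ m ∈ Finset.range (N * (L + 1) ^ (K - 1)), p m * altCost N L m) = D

/-- The optimal distribution `q*` for the alternative PIR scheme. -/
noncomputable def altOpt (N K L : ℕ) (D : ℝ) (m : ℕ) : ℝ :=
  if m < N then (1 - (L : ℝ) * (D - 1)) / N
  else (L : ℝ) * (D - 1) / ((N : ℝ) * ((L : ℝ) + 1) ^ (K - 1) - (N : ℝ))

/-- Rényi divergence of order `α` (`0 < α`, `α ≠ 1`) of a distribution `p` on `M`
options from the uniform distribution on those options (natural logarithm). -/
noncomputable def renyiDiv (M : ℕ) (α : ℝ) (p : ℕ → ℝ) : ℝ :=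
  (1 / (α - 1)) * Real.log ((M : ℝ) ^ (α - 1) * ∑ m ∈ Finset.range M, p m ^ α)

/-- Kullback–Leibler divergence of a distribution `p` on `M` options from the uniform
distribution on those options (natural logarithm, with `0 · log 0 = 0`). -/
noncomputable def klDivUnif (M : ℕ) (p : ℕ → ℝ) : ℝ :=
  ∑ m ∈ Finset.range M, p m * Real.log ((M : ℝ) * p m)

/-- The maximum of `p` over the `M` options. -/
noncomputable def maxOver (M : ℕ) (hM : M ≠ 0) (p : ℕ → ℝ) : ℝ :=
  (Finset.range M).sup' (Finset.nonempty_range_iff.mpr hM) p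

/-!
The feasibility constraints pin down the total mass that `p` puts on the `N` cheap options and
on the `N ^ K - N` expensive ones, and `p*` spreads each of these two masses uniformly over its
block. By Jensen's inequality for the convex function `x ↦ x log x`, spreading a fixed mass
uniformly minimizes `∑ x log x` over a block. The KL divergence from the uniform distribution is
`log (N ^ K) + ∑ pₘ log pₘ` for every probability vector, so the second claim follows.
-/

theorem ConvexOn.sum_map_le_of_const_of_sum_eq {ι : Type*} {S : Set ℝ} {f : ℝ → ℝ}
    (hf : ConvexOn ℝ S f) {t : Finset ι} {p q : ι → ℝ} (hp : ∀ i ∈ t, p i ∈ S)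
    (hq : ∀ i ∈ t, ∀ j ∈ t, q i = q j) (hsum : ∑ i ∈ t, q i = ∑ i ∈ t, p i) :
    ∑ i ∈ t, f (q i) ≤ ∑ i ∈ t, f (p i) := by
  rcases t.eq_empty_or_nonempty with rfl | ⟨i₀, hi₀⟩
  · simp
  have hcard : (0 : ℝ) < #t := by exact_mod_cast card_pos.mpr ⟨i₀, hi₀⟩
  rw [sum_congr rfl fun i hi => hq i hi i₀ hi₀, sum_const, nsmul_eq_mul] at hsum
  rw [sum_congr rfl fun i hi => congrArg f (hq i hi i₀ hi₀), sum_const, nsmul_eq_mul,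
    ← le_inv_mul_iff₀ hcard]
  have jensen := hf.map_sum_le (w := fun _ => (#t : ℝ)⁻¹) (fun _ _ => by positivity)
    (by simp [hcard.ne']) hp
  simpa only [smul_eq_mul, ← mul_sum, ← hsum, inv_mul_cancel_left₀ hcard.ne'] using jensen

theorem klDivUnif_eq_sum_mul_log_add (M : ℕ) (q : ℕ → ℝ) :
    klDivUnif M q = (∑ m ∈ range M, q m) * log M + ∑ m ∈ range M, q m * log (q m) := by
  rw [klDivUnif, sum_mul, ← sum_add_distrib]
  refine sum_congr rfl fun m hm => ?_
  rcases eq_or_ne (q m) 0 with hqm | hqm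
  · simp [hqm]
  have hM : (M : ℝ) ≠ 0 := Nat.cast_ne_zero.mpr (ne_zero_of_lt (mem_range.mp hm))
  rw [log_mul hM hqm, mul_add]

section TSC

variable {N K : ℕ} {D : ℝ}

theorem sum_range_pow_split (hK : K ≠ 0) (f : ℕ → ℝ) :
    ∑ m ∈ range (N ^ K), f m = ∑ m ∈ range N, f m + ∑ m ∈ Ico N (N ^ K), f m :=
  (sum_range_add_sum_Ico f (Nat.le_self_pow hK N)).symm

theorem sum_range_pow_mul_tscCost (hK : K ≠ 0) (f : ℕ → ℝ) :
    ∑ m ∈ range (N ^ K), f m * tscCost N m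
      = (N - 1) * ∑ m ∈ range (N ^ K), f m + ∑ m ∈ Ico N (N ^ K), f m := by
  have low : ∀ m ∈ range N, f m * tscCost N m = (N - 1) * f m := fun m hm => by
    rw [tscCost, if_pos (mem_range.mp hm), mul_comm]
  have high : ∀ m ∈ Ico N (N ^ K), f m * tscCost N m = (N - 1) * f m + f m := fun m hm => by
    rw [tscCost, if_neg (mem_Ico.mp hm).1.not_gt]
    ring
  rw [sum_range_pow_split hK, sum_range_pow_split hK, sum_congr rfl low, sum_congr rfl high,
    sum_add_distrib, ← mul_sum, ← mul_sum]
  ring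

theorem TSCFeasible.sum_Ico {p : ℕ → ℝ} (hN : 1 < N) (hK : K ≠ 0)
    (hp : TSCFeasible N K D p) :
    ∑ m ∈ Ico N (N ^ K), p m = (N - 1) * (D - 1) := by
  obtain ⟨-, hsum, hcost⟩ := hp
  have hN1 : (N - 1 : ℝ) ≠ 0 := sub_ne_zero.mpr (by exact_mod_cast hN.ne')
  rw [sum_range_pow_mul_tscCost hK, hsum] at hcost
  field_simp at hcost
  linear_combination hcost

theorem TSCFeasible.sum_range {p : ℕ → ℝ} (hN : 1 < N) (hK : K ≠ 0)
    (hp : TSCFeasible N K D p) :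
    ∑ m ∈ range N, p m = 1 - (N - 1) * (D - 1) := by
  rw [← hp.sum_Ico hN hK, ← hp.2.1, sum_range_pow_split hK]
  ring

theorem tscOpt_of_lt {m : ℕ} (hm : m < N) :
    tscOpt N K D m = (1 - (N - 1) * (D - 1)) / N :=
  if_pos hm

theorem tscOpt_of_le {m : ℕ} (hm : N ≤ m) :
    tscOpt N K D m = (N - 1) * (D - 1) / ((N : ℝ) ^ K - N) :=
  if_neg hm.not_gt

theorem sum_range_tscOpt (hN : N ≠ 0) :
    ∑ m ∈ range N, tscOpt N K D m = 1 - (N - 1) * (D - 1) := by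
  rw [sum_congr rfl fun m hm => tscOpt_of_lt (mem_range.mp hm), sum_const, card_range,
    nsmul_eq_mul]
  field_simp

theorem sum_Ico_tscOpt (hN : 1 < N) (hK : 1 < K) :
    ∑ m ∈ Ico N (N ^ K), tscOpt N K D m = (N - 1) * (D - 1) := by
  have hNK : N < N ^ K := lt_self_pow₀ hN hK
  have hne : ((N : ℝ) ^ K - N) ≠ 0 := sub_ne_zero.mpr (by exact_mod_cast hNK.ne')
  rw [sum_congr rfl fun m hm => tscOpt_of_le (mem_Ico.mp hm).1, sum_const,
    Nat.card_Ico, nsmul_eq_mul, Nat.cast_sub hNK.le, Nat.cast_pow]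
  field_simp

end TSC

theorem tsc_kl_min_general (N K : ℕ) (hN : 2 ≤ N) (hK : 2 ≤ K) (D : ℝ)
    (p : ℕ → ℝ) (hp : TSCFeasible N K D p) :
    (∑ m ∈ Finset.range (N ^ K), tscOpt N K D m * Real.log (tscOpt N K D m)) ≤
      (∑ m ∈ Finset.range (N ^ K), p m * Real.log (p m)) ∧
    klDivUnif (N ^ K) (tscOpt N K D) ≤ klDivUnif (N ^ K) p := by
  have hK0 : K ≠ 0 := by omega
  have hp0 : ∀ m ∈ range (N ^ K), p m ∈ Set.Ici 0 := hp.1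
  have entropy : ∑ m ∈ range (N ^ K), tscOpt N K D m * log (tscOpt N K D m)
      ≤ ∑ m ∈ range (N ^ K), p m * log (p m) := by
    rw [sum_range_pow_split hK0, sum_range_pow_split hK0]
    refine add_le_add ?_ ?_ <;> refine convexOn_mul_log.sum_map_le_of_const_of_sum_eq ?_ ?_ ?_
    · exact fun m hm => hp0 m (range_subset_range.mpr (Nat.le_self_pow hK0 N) hm)
    · intro i hi j hj
      rw [tscOpt_of_lt (mem_range.mp hi), tscOpt_of_lt (mem_range.mp hj)]
    · rw [sum_range_tscOpt (by omega), hp.sum_range (by omega) hK0]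
    · exact fun m hm => hp0 m (mem_range.mpr (mem_Ico.mp hm).2)
    · intro i hi j hj
      rw [tscOpt_of_le (mem_Ico.mp hi).1, tscOpt_of_le (mem_Ico.mp hj).1]
    · rw [sum_Ico_tscOpt (by omega) (by omega), hp.sum_Ico (by omega) hK0]
  have hopt : ∑ m ∈ range (N ^ K), tscOpt N K D m = 1 := by
    rw [sum_range_pow_split hK0, sum_range_tscOpt (by omega),
      sum_Ico_tscOpt (by omega) (by omega)]
    ring
  refine ⟨entropy, ?_⟩
  rw [klDivUnif_eq_sum_mul_log_add, klDivUnif_eq_sum_mul_log_add, hopt, hp.2.1]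
  linarith

/-- every feasible `p` for the symmetric TSC scheme satisfies
`∑ pₘ log pₘ ≥ ∑ p*ₘ log p*ₘ`; consequently `p*` minimizes the KL divergence
`∑ pₘ log (N^K pₘ)` from uniform among feasible distributions. -/
theorem tsc_kl_min (N K : ℕ) (hN : 2 ≤ N) (hK : 2 ≤ K) (D : ℝ)
    (hD1 : 1 ≤ D) (hD2 : D ≤ ∑ k ∈ Finset.range K, ((N : ℝ) ^ k)⁻¹)
    (p : ℕ → ℝ) (hp : TSCFeasible N K D p) :
    (∑ m ∈ Finset.range (N ^ K), tscOpt N K D m * Real.log (tscOpt N K D m)) ≤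
      (∑ m ∈ Finset.range (N ^ K), p m * Real.log (p m)) ∧
    klDivUnif (N ^ K) (tscOpt N K D) ≤ klDivUnif (N ^ K) p :=
  tsc_kl_min_general N K hN hK D p hp
end

section
/- For every real α ∈ (0,∞) with α ≠ 1, the minimum of the Rényi divergence D_α(p‖U) over all feasible distributions p for the alternative PIR scheme equals (1/(α−1)) · log[ N·((1−L(D−1))/N)^α + (N(L+1)^{K−1}−N)·(L(D−1)/(N(L+1)^{K−1}−N))^α ] + log(N(L+1)^{K−1}), and this minimum is attained by q*. -/
open Finset Real

/-!
The cost constraint fixes the total mass of the `N` cheap options at `1 - L(D-1)` and that of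
the `M - N` expensive ones at `L(D-1)`; `q*` spreads each of these masses uniformly over its
block. Since `x ↦ x ^ α` is convex for `α ≥ 1` and concave for `α ≤ 1`, Jensen's inequality on
each block gives `(α - 1) (∑ p_m ^ α - ∑ q*_m ^ α) ≥ 0`, and `t ↦ log t / (α - 1)` is monotone
in exactly the direction that turns this into `D_α(q*‖U) ≤ D_α(p‖U)`.
-/

section RpowSum

variable {ι : Type*} (s : Finset ι) {p : ι → ℝ}

theorem card_mul_rpow_mean_le_sum_rpow (hp : ∀ i ∈ s, 0 ≤ p i) {α : ℝ} (hα : 1 ≤ α) :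
    #s * ((∑ i ∈ s, p i) / #s) ^ α ≤ ∑ i ∈ s, p i ^ α := by
  rcases s.eq_empty_or_nonempty with rfl | hs
  · simp
  have hc : (0 : ℝ) < #s := by exact_mod_cast hs.card_pos
  have h := (convexOn_rpow hα).map_sum_le (t := s) (w := fun _ => (#s : ℝ)⁻¹) (p := p)
    (fun _ _ => by positivity) (by simp [hc.ne']) hp
  simp only [smul_eq_mul, inv_mul_eq_div, ← sum_div] at h
  calc _ ≤ (#s : ℝ) * ((∑ i ∈ s, p i ^ α) / #s) := by gcongr
    _ = _ := mul_div_cancel₀ _ hc.ne'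

theorem sum_rpow_le_card_mul_rpow_mean (hp : ∀ i ∈ s, 0 ≤ p i) {α : ℝ} (hα₀ : 0 ≤ α)
    (hα₁ : α ≤ 1) : ∑ i ∈ s, p i ^ α ≤ #s * ((∑ i ∈ s, p i) / #s) ^ α := by
  rcases s.eq_empty_or_nonempty with rfl | hs
  · simp
  have hc : (0 : ℝ) < #s := by exact_mod_cast hs.card_pos
  have h := (concaveOn_rpow hα₀ hα₁).le_map_sum (t := s) (w := fun _ => (#s : ℝ)⁻¹) (p := p)
    (fun _ _ => by positivity) (by simp [hc.ne']) hp
  simp only [smul_eq_mul, inv_mul_eq_div, ← sum_div] at h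
  calc _ = (#s : ℝ) * ((∑ i ∈ s, p i ^ α) / #s) := (mul_div_cancel₀ _ hc.ne').symm
    _ ≤ _ := by gcongr

theorem sub_one_mul_sum_rpow_sub_card_mul_rpow_mean_nonneg (hp : ∀ i ∈ s, 0 ≤ p i) {α : ℝ}
    (hα : 0 ≤ α) : 0 ≤ (α - 1) * (∑ i ∈ s, p i ^ α - #s * ((∑ i ∈ s, p i) / #s) ^ α) := by
  rcases le_total 1 α with h | h
  · exact mul_nonneg (by linarith) (sub_nonneg.2 (card_mul_rpow_mean_le_sum_rpow s hp h))
  · exact mul_nonneg_of_nonpos_of_nonpos (by linarith)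
      (sub_nonpos.2 (sum_rpow_le_card_mul_rpow_mean s hp hα h))

theorem sum_rpow_pos (hp : ∀ i ∈ s, 0 ≤ p i) (hs : 0 < ∑ i ∈ s, p i) (α : ℝ) :
    0 < ∑ i ∈ s, p i ^ α := by
  obtain ⟨i, hi, hpi⟩ := (sum_pos_iff_of_nonneg hp).1 hs
  exact (sum_pos_iff_of_nonneg fun j hj => rpow_nonneg (hp j hj) α).2 ⟨i, hi, rpow_pos_of_pos hpi α⟩

end RpowSum

theorem one_div_sub_one_mul_log_le {α x y : ℝ} (hx : 0 < x) (hy : 0 < y)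
    (h : 0 ≤ (α - 1) * (y - x)) : 1 / (α - 1) * log x ≤ 1 / (α - 1) * log y := by
  rcases lt_trichotomy α 1 with hα | rfl | hα
  · have hyx : y ≤ x := by nlinarith
    exact mul_le_mul_of_nonpos_left (log_le_log hy hyx) (one_div_nonpos.2 (by linarith))
  · simp
  · have hxy : x ≤ y := by nlinarith
    exact mul_le_mul_of_nonneg_left (log_le_log hx hxy) (one_div_nonneg.2 (by linarith))

theorem renyiDiv_eq_one_div_mul_log_add_log {M : ℕ} (hM : M ≠ 0) {α : ℝ} (hα : α ≠ 1)
    {p : ℕ → ℝ} (hp : 0 < ∑ m ∈ range M, p m ^ α) :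
    renyiDiv M α p = 1 / (α - 1) * log (∑ m ∈ range M, p m ^ α) + log M := by
  have hα' : α - 1 ≠ 0 := sub_ne_zero.2 hα
  rw [renyiDiv, log_mul (by positivity) hp.ne', log_rpow (by positivity)]
  field_simp
  ring

theorem sub_one_mul_sum_inv_pow_le {n : ℝ} (hn : 1 < n) (K : ℕ) :
    (n - 1) * ∑ k ∈ range K, (n ^ k)⁻¹ ≤ n := by
  have h := geom_sum_mul n⁻¹ K
  simp only [inv_pow] at h
  have hpow : 0 ≤ (n ^ K)⁻¹ := by positivity
  have hn0 : n ≠ 0 := by positivity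
  calc (n - 1) * ∑ k ∈ range K, (n ^ k)⁻¹ = - n * ((∑ k ∈ range K, (n ^ k)⁻¹) * (n⁻¹ - 1)) := by
        field_simp; ring
    _ ≤ n := by rw [h]; nlinarith

theorem mul_sub_one_le_one_of_le_sum_inv_pow {n l D : ℝ} {K : ℕ} (hn : 1 < n) (hl : l ≤ n - 1)
    (hD₁ : 1 ≤ D) (hD : D ≤ ∑ k ∈ range K, (n ^ k)⁻¹) : l * (D - 1) ≤ 1 := by
  have hsum := sub_one_mul_sum_inv_pow_le hn K
  nlinarith

section Blocks

variable {N M : ℕ} (hNM : N ≤ M)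
include hNM

theorem sum_range_ite_lt (u v : ℝ) :
    ∑ m ∈ range M, (if m < N then u else v) = N * u + (M - N : ℝ) * v := by
  rw [← sum_range_add_sum_Ico _ hNM,
    sum_congr rfl fun m hm => if_pos (mem_range.1 hm),
    sum_congr rfl fun m hm => if_neg (not_lt.2 (mem_Ico.1 hm).1)]
  simp [Nat.cast_sub hNM]

theorem sub_one_mul_sum_rpow_sub_two_block_nonneg {p : ℕ → ℝ} (hp : ∀ m ∈ range M, 0 ≤ p m)
    {α : ℝ} (hα : 0 ≤ α) :
    0 ≤ (α - 1) * (∑ m ∈ range M, p m ^ α -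
      (N * ((∑ m ∈ range N, p m) / N) ^ α +
        (M - N : ℝ) * ((∑ m ∈ Ico N M, p m) / (M - N : ℝ)) ^ α)) := by
  have h₁ := sub_one_mul_sum_rpow_sub_card_mul_rpow_mean_nonneg (range N)
    (fun m hm => hp m (mem_range.2 ((mem_range.1 hm).trans_le hNM))) hα
  have h₂ := sub_one_mul_sum_rpow_sub_card_mul_rpow_mean_nonneg (Ico N M)
    (fun m hm => hp m (mem_range.2 (mem_Ico.1 hm).2)) hα
  rw [card_range] at h₁
  rw [Nat.card_Ico, Nat.cast_sub hNM] at h₂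
  rw [← sum_range_add_sum_Ico _ hNM]
  linear_combination h₁ + h₂

theorem sum_mul_altCost (L : ℕ) (p : ℕ → ℝ) :
    ∑ m ∈ range M, p m * altCost N L m = L * ∑ m ∈ range M, p m + ∑ m ∈ Ico N M, p m := by
  have h₁ : ∑ m ∈ range N, p m * altCost N L m = L * ∑ m ∈ range N, p m := by
    rw [mul_sum]
    exact sum_congr rfl fun m hm => by rw [altCost, if_pos (mem_range.1 hm), mul_comm]
  have h₂ : ∑ m ∈ Ico N M, p m * altCost N L m = (L + 1) * ∑ m ∈ Ico N M, p m := by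
    rw [mul_sum]
    exact sum_congr rfl fun m hm => by rw [altCost, if_neg (not_lt.2 (mem_Ico.1 hm).1), mul_comm]
  rw [← sum_range_add_sum_Ico (fun m => p m * altCost N L m) hNM, ← sum_range_add_sum_Ico p hNM,
    h₁, h₂]
  ring

end Blocks

section AltScheme

variable {N K L : ℕ} {D : ℝ}

theorem le_mul_succ_pow : N ≤ N * (L + 1) ^ (K - 1) :=
  Nat.le_mul_of_pos_right N (pow_pos L.succ_pos _)

theorem AltFeasible.sum_Ico_eq {p : ℕ → ℝ} (hp : AltFeasible N K L D p) (hL : L ≠ 0) :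
    ∑ m ∈ Ico N (N * (L + 1) ^ (K - 1)), p m = L * (D - 1) := by
  obtain ⟨-, hsum, hcost⟩ := hp
  rw [sum_mul_altCost le_mul_succ_pow, hsum] at hcost
  field_simp at hcost
  linarith

theorem AltFeasible.sum_range_eq {p : ℕ → ℝ} (hp : AltFeasible N K L D p) (hL : L ≠ 0) :
    ∑ m ∈ range N, p m = 1 - L * (D - 1) := by
  rw [← hp.sum_Ico_eq hL, ← hp.2.1, ← sum_range_add_sum_Ico p le_mul_succ_pow]
  ring

theorem altFeasible_altOpt (hNM : N < N * (L + 1) ^ (K - 1)) (hL : L ≠ 0) (hD : 1 ≤ D)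
    (hLD : L * (D - 1) ≤ 1) : AltFeasible N K L D (altOpt N K L D) := by
  have hN : (0 : ℝ) < N := by exact_mod_cast Nat.pos_of_ne_zero (by rintro rfl; simp at hNM)
  have hcast : ((N * (L + 1) ^ (K - 1) : ℕ) : ℝ) = N * ((L : ℝ) + 1) ^ (K - 1) := by push_cast; rfl
  have hM : (N : ℝ) < N * ((L : ℝ) + 1) ^ (K - 1) := by exact_mod_cast hNM
  have hcost : ∀ m, altOpt N K L D m * altCost N L m =
      if m < N then (1 - L * (D - 1)) / N * L
      else L * (D - 1) / (N * ((L : ℝ) + 1) ^ (K - 1) - N) * (L + 1) := by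
    intro m
    unfold altOpt altCost
    split_ifs <;> rfl
  refine ⟨fun m _ => ?_, ?_, ?_⟩
  · unfold altOpt
    split_ifs
    · exact div_nonneg (by linarith) hN.le
    · exact div_nonneg (mul_nonneg (Nat.cast_nonneg L) (by linarith)) (by linarith)
  on_goal 2 => rw [sum_congr rfl fun m _ => hcost m]
  all_goals
    simp only [altOpt, sum_range_ite_lt hNM.le, hcast]
    generalize (N : ℝ) * ((L : ℝ) + 1) ^ (K - 1) = M at hM ⊢
    have hden : M - N ≠ 0 := (sub_pos.2 hM).ne'
    field_simp
    ring

theorem sum_rpow_altOpt (α : ℝ) :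
    ∑ m ∈ range (N * (L + 1) ^ (K - 1)), altOpt N K L D m ^ α =
      N * ((1 - L * (D - 1)) / N) ^ α +
        (N * ((L : ℝ) + 1) ^ (K - 1) - N) *
          (L * (D - 1) / (N * ((L : ℝ) + 1) ^ (K - 1) - N)) ^ α := by
  simp only [altOpt, apply_ite (· ^ α)]
  rw [sum_range_ite_lt le_mul_succ_pow]
  push_cast
  rfl

theorem AltFeasible.sub_one_mul_sum_rpow_sub_nonneg {p : ℕ → ℝ} (hp : AltFeasible N K L D p)
    (hL : L ≠ 0) {α : ℝ} (hα : 0 ≤ α) :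
    0 ≤ (α - 1) * (∑ m ∈ range (N * (L + 1) ^ (K - 1)), p m ^ α -
      (N * ((1 - L * (D - 1)) / N) ^ α +
        (N * ((L : ℝ) + 1) ^ (K - 1) - N) *
          (L * (D - 1) / (N * ((L : ℝ) + 1) ^ (K - 1) - N)) ^ α)) := by
  have h := sub_one_mul_sum_rpow_sub_two_block_nonneg le_mul_succ_pow hp.1 hα
  rw [hp.sum_range_eq hL, hp.sum_Ico_eq hL] at h
  push_cast at h
  exact h

end AltScheme

theorem alt_renyi_tradeoff_general (N K L : ℕ) (hK : 2 ≤ K)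
    (hL1 : 1 ≤ L) (hL2 : L ≤ N - 2) (D : ℝ)
    (hD1 : 1 ≤ D) (hD2 : D ≤ ∑ k ∈ Finset.range K, ((N : ℝ) ^ k)⁻¹)
    (α : ℝ) (hα0 : 0 < α) (hα1 : α ≠ 1) :
    AltFeasible N K L D (altOpt N K L D) ∧
    (∀ p : ℕ → ℝ, AltFeasible N K L D p →
      (1 / (α - 1)) * Real.log
          ((N : ℝ) * ((1 - (L : ℝ) * (D - 1)) / N) ^ α +
            ((N : ℝ) * ((L : ℝ) + 1) ^ (K - 1) - N) *
              ((L : ℝ) * (D - 1) / ((N : ℝ) * ((L : ℝ) + 1) ^ (K - 1) - N)) ^ α) +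
        Real.log ((N : ℝ) * ((L : ℝ) + 1) ^ (K - 1)) ≤
        renyiDiv (N * (L + 1) ^ (K - 1)) α p) ∧
    renyiDiv (N * (L + 1) ^ (K - 1)) α (altOpt N K L D) =
      (1 / (α - 1)) * Real.log
          ((N : ℝ) * ((1 - (L : ℝ) * (D - 1)) / N) ^ α +
            ((N : ℝ) * ((L : ℝ) + 1) ^ (K - 1) - N) *
              ((L : ℝ) * (D - 1) / ((N : ℝ) * ((L : ℝ) + 1) ^ (K - 1) - N)) ^ α) +
        Real.log ((N : ℝ) * ((L : ℝ) + 1) ^ (K - 1)) := by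
  have hL : L ≠ 0 := by omega
  have hNM : N < N * (L + 1) ^ (K - 1) :=
    lt_mul_right (by omega) (Nat.one_lt_pow (by omega) (by omega))
  have hM : N * (L + 1) ^ (K - 1) ≠ 0 := by omega
  have hcast : ((N * (L + 1) ^ (K - 1) : ℕ) : ℝ) = N * ((L : ℝ) + 1) ^ (K - 1) := by push_cast; rfl
  have hLN : (L : ℝ) ≤ N - 1 := by
    rw [le_sub_iff_add_le]; exact_mod_cast (by omega : L + 1 ≤ N)
  have hopt := altFeasible_altOpt hNM hL hD1
    (mul_sub_one_le_one_of_le_sum_inv_pow (by exact_mod_cast (by omega : 1 < N)) hLN hD1 hD2)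
  have hpos : ∀ p, AltFeasible N K L D p → 0 < ∑ m ∈ range (N * (L + 1) ^ (K - 1)), p m ^ α :=
    fun p hp => sum_rpow_pos _ hp.1 (by rw [hp.2.1]; exact one_pos) α
  refine ⟨hopt, fun p hp => ?_, ?_⟩
  · rw [renyiDiv_eq_one_div_mul_log_add_log hM hα1 (hpos p hp), hcast]
    gcongr ?_ + _
    refine one_div_sub_one_mul_log_le ?_ (hpos p hp)
      (hp.sub_one_mul_sum_rpow_sub_nonneg hL hα0.le)
    rw [← sum_rpow_altOpt]
    exact hpos _ hopt
  · rw [renyiDiv_eq_one_div_mul_log_add_log hM hα1 (hpos _ hopt), sum_rpow_altOpt, hcast]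

/-- for every order `α ∈ (0,∞)`, `α ≠ 1`, the minimum of the Rényi
divergence from uniform over feasible distributions of the alternative PIR scheme equals
`(1/(α-1)) log[N((1-L(D-1))/N)^α + (N(L+1)^(K-1)-N)(L(D-1)/(N(L+1)^(K-1)-N))^α]
 + log(N(L+1)^(K-1))`, attained by `q*`. -/
theorem alt_renyi_tradeoff (N K L : ℕ) (hN : 3 ≤ N) (hK : 2 ≤ K)
    (hL1 : 1 ≤ L) (hL2 : L ≤ N - 2) (D : ℝ)
    (hD1 : 1 ≤ D) (hD2 : D ≤ ∑ k ∈ Finset.range K, ((N : ℝ) ^ k)⁻¹)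
    (α : ℝ) (hα0 : 0 < α) (hα1 : α ≠ 1) :
    AltFeasible N K L D (altOpt N K L D) ∧
    (∀ p : ℕ → ℝ, AltFeasible N K L D p →
      (1 / (α - 1)) * Real.log
          ((N : ℝ) * ((1 - (L : ℝ) * (D - 1)) / N) ^ α +
            ((N : ℝ) * ((L : ℝ) + 1) ^ (K - 1) - N) *
              ((L : ℝ) * (D - 1) / ((N : ℝ) * ((L : ℝ) + 1) ^ (K - 1) - N)) ^ α) +
        Real.log ((N : ℝ) * ((L : ℝ) + 1) ^ (K - 1)) ≤
        renyiDiv (N * (L + 1) ^ (K - 1)) α p) ∧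
    renyiDiv (N * (L + 1) ^ (K - 1)) α (altOpt N K L D) =
      (1 / (α - 1)) * Real.log
          ((N : ℝ) * ((1 - (L : ℝ) * (D - 1)) / N) ^ α +
            ((N : ℝ) * ((L : ℝ) + 1) ^ (K - 1) - N) *
              ((L : ℝ) * (D - 1) / ((N : ℝ) * ((L : ℝ) + 1) ^ (K - 1) - N)) ^ α) +
        Real.log ((N : ℝ) * ((L : ℝ) + 1) ^ (K - 1)) :=
  alt_renyi_tradeoff_general N K L hK hL1 hL2 D hD1 hD2 α hα0 hα1
end
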